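/- Let π be a probability vector on {0,...,k} with all π_i > 0, let 0 < C* and suppose γ_i = X/Z − i·Y/Z (with X, Y, Z as defined from π, C*, and an index I) satisfies γ_i > 0 for 0 ≤ i ≤ I and γ_i ≤ 0 for I+1 ≤ i ≤ k. Then the weights w_i = γ_i for i ≤ I and w_i = 0 for i > I satisfy the KKT conditions of the problem: maximize (∑ w_i^2 π_i)^{-1} subject to w_i ≥ 0, ∑ w_i π_i = 1, ∑ i w_i π_i = C*; hence they are a global maximizer, giving maximum wear-leveling W* = 1/(∑_{i=0}^I γ_i^2 π_i). -/

import Mathlib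

/-!
Since `γ` is affine in `i`, the constraints `∑ wᵢπᵢ = 1` and `∑ i wᵢπᵢ = C*` fix the value of
`∑ wᵢγᵢπᵢ` for every feasible `w`; in particular it equals `S = ∑_{i≤I} γᵢ²πᵢ`. Writing `v` for the
candidate (`γ` truncated at `I`), `γᵢ ≤ 0` above `I` and `wᵢ ≥ 0` give `⟨w, v⟩ ≥ ⟨w, γ⟩ = S = ⟨v, v⟩`
in the `π`-weighted inner product, and then `0 ≤ ‖w - v‖²` yields `‖w‖² ≥ 2⟨w, v⟩ - ‖v‖² ≥ ‖v‖²`.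
-/

open Finset

lemma sum_range_ite_le_of_le {I k : ℕ} (h : I ≤ k) (f : ℕ → ℝ) :
    ∑ i ∈ range (k + 1), (if i ≤ I then f i else 0) = ∑ i ∈ range (I + 1), f i := by
  rw [← sum_filter]
  congr 1
  ext i
  simp only [mem_filter, mem_range]
  omega

lemma sum_mul_affine_mul {ι : Type*} (s : Finset ι) (t u γ π : ι → ℝ) {a b : ℝ}
    (hγ : ∀ i, γ i = a - t i * b) :
    ∑ i ∈ s, u i * γ i * π i = a * ∑ i ∈ s, u i * π i - b * ∑ i ∈ s, t i * u i * π i := by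
  simp only [hγ, mul_sum, ← sum_sub_distrib]
  exact sum_congr rfl fun i _ => by ring

lemma sum_sq_mul_le_of_le_sum_mul_mul {ι : Type*} {s : Finset ι} {π : ι → ℝ}
    (hπ : ∀ i ∈ s, 0 ≤ π i) {v w : ι → ℝ}
    (h : ∑ i ∈ s, v i ^ 2 * π i ≤ ∑ i ∈ s, w i * v i * π i) :
    ∑ i ∈ s, v i ^ 2 * π i ≤ ∑ i ∈ s, w i ^ 2 * π i := by
  have hdist : 0 ≤ ∑ i ∈ s, (w i - v i) ^ 2 * π i :=
    sum_nonneg fun i hi => mul_nonneg (sq_nonneg _) (hπ i hi)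
  have hexpand : ∑ i ∈ s, (w i - v i) ^ 2 * π i = ∑ i ∈ s, w i ^ 2 * π i
      - 2 * ∑ i ∈ s, w i * v i * π i + ∑ i ∈ s, v i ^ 2 * π i := by
    simp only [mul_sum, ← sum_sub_distrib, ← sum_add_distrib]
    exact sum_congr rfl fun i _ => by ring
  linarith

lemma sum_mul_le_sum_mul_ite_le {k I : ℕ} {w γ π : ℕ → ℝ} (hw : ∀ i ≤ k, 0 ≤ w i)
    (hγ : ∀ i, I + 1 ≤ i → i ≤ k → γ i ≤ 0) (hπ : ∀ i ≤ k, 0 ≤ π i) :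
    ∑ i ∈ range (k + 1), w i * γ i * π i
      ≤ ∑ i ∈ range (k + 1), w i * (if i ≤ I then γ i else 0) * π i := by
  refine sum_le_sum fun i hi => ?_
  have hik : i ≤ k := Nat.lt_succ_iff.mp (mem_range.mp hi)
  by_cases hiI : i ≤ I
  · simp only [hiI, if_true, le_refl]
  · simp only [hiI, if_false, mul_zero, zero_mul]
    exact mul_nonpos_of_nonpos_of_nonneg
      (mul_nonpos_of_nonneg_of_nonpos (hw i hik) (hγ i (by omega) hik)) (hπ i hik)

theorem stmt_15_general (k : ℕ) (π : ℕ → ℝ) (hpos : ∀ i ≤ k, 0 < π i)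
    (Cstar : ℝ) (I : ℕ) (hIk : I ≤ k)
    (X Y Z : ℝ) (γ : ℕ → ℝ)
    (hγ : ∀ i, γ i = X / Z - (i : ℝ) * Y / Z)
    (hγpos : ∀ i ≤ I, 0 < γ i)
    (hγnonpos : ∀ i, I + 1 ≤ i → i ≤ k → γ i ≤ 0)
    (hfeas1 : ∑ i ∈ Finset.range (I + 1), γ i * π i = 1)
    (hfeas2 : ∑ i ∈ Finset.range (I + 1), (i : ℝ) * γ i * π i = Cstar) :
    -- the candidate weights (γ on {0,...,I}, 0 above) are feasible and optimal
    (∑ i ∈ Finset.range (k + 1), (if i ≤ I then γ i else 0) * π i = 1) ∧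
    (∑ i ∈ Finset.range (k + 1), (i : ℝ) * (if i ≤ I then γ i else 0) * π i = Cstar) ∧
    (∀ w : ℕ → ℝ, (∀ i ≤ k, 0 ≤ w i) →
      ∑ i ∈ Finset.range (k + 1), w i * π i = 1 →
      ∑ i ∈ Finset.range (k + 1), (i : ℝ) * w i * π i = Cstar →
      (∑ i ∈ Finset.range (k + 1), (w i) ^ 2 * π i)⁻¹
        ≤ 1 / (∑ i ∈ Finset.range (I + 1), (γ i) ^ 2 * π i)) := by
  simp only [ite_mul, mul_ite, zero_mul, mul_zero, sum_range_ite_le_of_le hIk]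
  refine ⟨hfeas1, hfeas2, fun w hw hw1 hw2 => ?_⟩
  have hγ' : ∀ i, γ i = X / Z - (i : ℝ) * (Y / Z) := fun i => by rw [hγ, mul_div_assoc]
  have hπ : ∀ i ≤ k, 0 ≤ π i := fun i hi => (hpos i hi).le
  set v : ℕ → ℝ := fun i => if i ≤ I then γ i else 0
  have hvv : ∑ i ∈ range (k + 1), v i ^ 2 * π i = ∑ i ∈ range (I + 1), γ i ^ 2 * π i := by
    simp only [v, ite_pow, ite_mul, zero_pow two_ne_zero, zero_mul, sum_range_ite_le_of_le hIk]
  have hSpos : 0 < ∑ i ∈ range (I + 1), γ i ^ 2 * π i := by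
    refine sum_pos (fun i hi => ?_) nonempty_range_add_one
    have hiI : i ≤ I := Nat.lt_succ_iff.mp (mem_range.mp hi)
    exact mul_pos (pow_pos (hγpos i hiI) 2) (hpos i (hiI.trans hIk))
  have hvv_eq_wγ : ∑ i ∈ range (k + 1), v i ^ 2 * π i = ∑ i ∈ range (k + 1), w i * γ i * π i := by
    rw [hvv]
    simp only [sq]
    rw [sum_mul_affine_mul _ _ γ γ π hγ', sum_mul_affine_mul _ _ w γ π hγ',
      hfeas1, hfeas2, hw1, hw2]
  rw [one_div, ← hvv]
  exact inv_anti₀ (hvv ▸ hSpos)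
    (sum_sq_mul_le_of_le_sum_mul_mul (fun i hi => hπ i (Nat.lt_succ_iff.mp (mem_range.mp hi)))
      (hvv_eq_wγ.trans_le (sum_mul_le_sum_mul_ite_le hw hγnonpos hπ)))

/-- The KKT point `w_i = γ_i` (i ≤ I), `w_i = 0` (i > I), with
`γ_i = X/Z − i·Y/Z`, is a global maximizer of the wear-leveling
`(∑ wᵢ²πᵢ)⁻¹` subject to `wᵢ ≥ 0`, `∑ wᵢπᵢ = 1`, `∑ i wᵢπᵢ = C*`; the
maximum wear-leveling is `1/(∑_{i≤I} γ_i² π_i)`. -/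
theorem stmt_15 (k : ℕ) (π : ℕ → ℝ) (hpos : ∀ i ≤ k, 0 < π i)
    (hsum : ∑ i ∈ Finset.range (k + 1), π i = 1)
    (Cstar : ℝ) (hC : 0 < Cstar) (I : ℕ) (hIk : I ≤ k)
    (X Y Z : ℝ) (γ : ℕ → ℝ)
    (hX : X = ∑ i ∈ Finset.range (I + 1), (i : ℝ) ^ 2 * π i
            - Cstar * ∑ i ∈ Finset.range (I + 1), (i : ℝ) * π i)
    (hY : Y = ∑ i ∈ Finset.range (I + 1), (i : ℝ) * π i
            - Cstar * ∑ i ∈ Finset.range (I + 1), π i)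
    (hZ : Z = (∑ i ∈ Finset.range (I + 1), π i) *
                (∑ i ∈ Finset.range (I + 1), (i : ℝ) ^ 2 * π i)
            - (∑ i ∈ Finset.range (I + 1), (i : ℝ) * π i) ^ 2)
    (hγ : ∀ i, γ i = X / Z - (i : ℝ) * Y / Z)
    (hγpos : ∀ i ≤ I, 0 < γ i)
    (hγnonpos : ∀ i, I + 1 ≤ i → i ≤ k → γ i ≤ 0)
    (hfeas1 : ∑ i ∈ Finset.range (I + 1), γ i * π i = 1)
    (hfeas2 : ∑ i ∈ Finset.range (I + 1), (i : ℝ) * γ i * π i = Cstar) :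
    -- the candidate weights (γ on {0,...,I}, 0 above) are feasible and optimal
    (∑ i ∈ Finset.range (k + 1), (if i ≤ I then γ i else 0) * π i = 1) ∧
    (∑ i ∈ Finset.range (k + 1), (i : ℝ) * (if i ≤ I then γ i else 0) * π i = Cstar) ∧
    (∀ w : ℕ → ℝ, (∀ i ≤ k, 0 ≤ w i) →
      ∑ i ∈ Finset.range (k + 1), w i * π i = 1 →
      ∑ i ∈ Finset.range (k + 1), (i : ℝ) * w i * π i = Cstar →
      (∑ i ∈ Finset.range (k + 1), (w i) ^ 2 * π i)⁻¹
        ≤ 1 / (∑ i ∈ Finset.range (I + 1), (γ i) ^ 2 * π i)) :=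
  stmt_15_general k π hpos Cstar I hIk X Y Z γ hγ hγpos hγnonpos hfeas1 hfeas2
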